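/- arXiv:1803.08357 — 3 statements merged into one kernel-verified Lean document; each statement's English description precedes it below -/
import Mathlib

section
/- Every 2×2 matrix over a finite field F_q can be written as the sum of two matrices of determinant 1; that is, SL₂(F_q) + SL₂(F_q) = M₂(F_q). -/
/-!
Since `det (P * M) = det P * det M`, the set of sums of two determinant-one matrices is stable
under multiplication on either side by a determinant-one matrix. Multiplying by the rotation
`J = !![0, -1; 1, 0]` on the left, the right or both moves any nonzero entry of `M` to position
`(1, 1)`, and `0 = J + (-J)`. When `M 1 1 = d ≠ 0`, subtract `A = !![x, -1; 1, 0]`: then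
`det (M - A) = (M 0 0 - x) * d - (M 0 1 + 1) * (M 1 0 - 1)` is affine in `x` with slope `-d`,
so some `x` makes it equal to `1`.
-/

open Matrix

namespace Matrix

variable {n R : Type*} [Fintype n] [DecidableEq n] [CommRing R]

def IsSumOfTwoDetOne (M : Matrix n n R) : Prop :=
  ∃ A B : Matrix n n R, A.det = 1 ∧ B.det = 1 ∧ M = A + B

theorem IsSumOfTwoDetOne.mul_left {P M : Matrix n n R} (hP : P.det = 1)
    (hM : IsSumOfTwoDetOne M) : IsSumOfTwoDetOne (P * M) := by
  obtain ⟨A, B, hA, hB, rfl⟩ := hM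
  exact ⟨P * A, P * B, by rw [det_mul, hP, hA, one_mul], by rw [det_mul, hP, hB, one_mul],
    mul_add P A B⟩

theorem IsSumOfTwoDetOne.mul_right {P M : Matrix n n R} (hP : P.det = 1)
    (hM : IsSumOfTwoDetOne M) : IsSumOfTwoDetOne (M * P) := by
  obtain ⟨A, B, hA, hB, rfl⟩ := hM
  exact ⟨A * P, B * P, by rw [det_mul, hP, hA, one_mul], by rw [det_mul, hP, hB, one_mul],
    add_mul A B P⟩

theorem isSumOfTwoDetOne_mul_left_iff {P M : Matrix n n R} (hP : P.det = 1) :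
    IsSumOfTwoDetOne (P * M) ↔ IsSumOfTwoDetOne M := by
  have hPu : IsUnit P.det := hP ▸ isUnit_one
  refine ⟨fun h => ?_, IsSumOfTwoDetOne.mul_left hP⟩
  have hP' : P⁻¹.det = 1 := by rw [det_nonsing_inv, hP, Ring.inverse_one]
  simpa [← Matrix.mul_assoc, nonsing_inv_mul P hPu] using h.mul_left hP'

theorem isSumOfTwoDetOne_mul_right_iff {P M : Matrix n n R} (hP : P.det = 1) :
    IsSumOfTwoDetOne (M * P) ↔ IsSumOfTwoDetOne M := by
  have hPu : IsUnit P.det := hP ▸ isUnit_one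
  refine ⟨fun h => ?_, IsSumOfTwoDetOne.mul_right hP⟩
  have hP' : P⁻¹.det = 1 := by rw [det_nonsing_inv, hP, Ring.inverse_one]
  simpa [Matrix.mul_assoc, mul_nonsing_inv P hPu] using h.mul_right hP'

theorem det_rotation : (!![0, -1; 1, 0] : Matrix (Fin 2) (Fin 2) R).det = 1 := by
  simp [det_fin_two_of]

theorem isSumOfTwoDetOne_zero : IsSumOfTwoDetOne (0 : Matrix (Fin 2) (Fin 2) R) :=
  ⟨!![0, -1; 1, 0], !![0, 1; -1, 0], det_rotation, by simp [det_fin_two_of], by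
    ext i j; fin_cases i <;> fin_cases j <;> simp⟩

theorem isSumOfTwoDetOne_of_apply_one_one_ne_zero {K : Type*} [Field K]
    {M : Matrix (Fin 2) (Fin 2) K} (hM : M 1 1 ≠ 0) : IsSumOfTwoDetOne M := by
  set A : Matrix (Fin 2) (Fin 2) K :=
    !![M 0 0 - (1 + (M 0 1 + 1) * (M 1 0 - 1)) / M 1 1, -1; 1, 0]
  refine ⟨A, M - A, by simp [A, det_fin_two_of], ?_, by abel⟩
  rw [det_fin_two]
  simp only [A, sub_apply, of_apply, cons_val', cons_val_zero, cons_val_one, empty_val',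
    cons_val_fin_one]
  field_simp
  ring

end Matrix

theorem sl2_add_sl2_eq_m2_general {F : Type*} [Field F]
    (M : Matrix (Fin 2) (Fin 2) F) :
    ∃ A B : Matrix (Fin 2) (Fin 2) F, A.det = 1 ∧ B.det = 1 ∧ M = A + B := by
  change IsSumOfTwoDetOne M
  by_cases hM : M = 0
  · exact hM ▸ isSumOfTwoDetOne_zero
  obtain ⟨i, j, hij⟩ : ∃ i j, M i j ≠ 0 := by
    by_contra! h
    exact hM (Matrix.ext h)
  have hJ := det_rotation (R := F)
  fin_cases i <;> fin_cases j
  · rw [← isSumOfTwoDetOne_mul_left_iff hJ, ← isSumOfTwoDetOne_mul_right_iff hJ]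
    exact isSumOfTwoDetOne_of_apply_one_one_ne_zero (by simpa [mul_apply, vecMul, dotProduct, Fin.sum_univ_two] using hij)
  · rw [← isSumOfTwoDetOne_mul_left_iff hJ]
    exact isSumOfTwoDetOne_of_apply_one_one_ne_zero (by simpa [mul_apply, vecMul, dotProduct, Fin.sum_univ_two] using hij)
  · rw [← isSumOfTwoDetOne_mul_right_iff hJ]
    exact isSumOfTwoDetOne_of_apply_one_one_ne_zero (by simpa [mul_apply, vecMul, dotProduct, Fin.sum_univ_two] using hij)
  · exact isSumOfTwoDetOne_of_apply_one_one_ne_zero hij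

theorem sl2_add_sl2_eq_m2 {F : Type*} [Field F] [Fintype F]
    (M : Matrix (Fin 2) (Fin 2) F) :
    ∃ A B : Matrix (Fin 2) (Fin 2) F, A.det = 1 ∧ B.det = 1 ∧ M = A + B :=
  sl2_add_sl2_eq_m2_general M
end

section
/- For a fixed matrix A in SL₂(F_q), the number of matrices X in SL₂(F_q) with X ≠ A and det(A − X) = 0 is exactly q² − 1. -/
open scoped Classical

open Finset Matrix in
private lemma card_pairs_mul_eq_ne_zero {F : Type*} [Field F] [Fintype F] (r : F) (hr : r ≠ 0) :
    ((univ : Finset (F × F)).filter (fun p => p.1 * p.2 = r)).card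
      = Fintype.card F - 1 := by
  have : Fintype.card F - 1 = ((univ : Finset F).filter (fun b => b ≠ 0)).card := by
    rw [Finset.filter_ne', Finset.card_erase_of_mem (mem_univ _), Finset.card_univ]
  rw [this]
  apply Finset.card_bij' (fun p _ => p.1) (fun b _ => (b, b⁻¹ * r)) <;>
    simp only [mem_filter, mem_univ, true_and]
  · intro p hp
    intro h; rw [h, zero_mul] at hp; exact hr hp.symm
  · intro b hb
    field_simp
  · intro p hp
    have h1 : p.1 ≠ 0 := by intro h; rw [h, zero_mul] at hp; exact hr hp.symm
    have : p.1⁻¹ * r = p.2 := by rw [← hp]; field_simp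
    ext <;> simp [this]
  · intro b hb; trivial

open Finset Matrix in
private lemma card_pairs_mul_zero {F : Type*} [Field F] [Fintype F] :
    ((univ : Finset (F × F)).filter (fun p => p.1 * p.2 = 0 ∧ ¬(p.1 = 0 ∧ p.2 = 0))).card
      = 2 * (Fintype.card F - 1) := by
  have hcongr : (univ : Finset (F × F)).filter (fun p => p.1 * p.2 = 0 ∧ ¬(p.1 = 0 ∧ p.2 = 0))
      = ({(0 : F)} ×ˢ (univ.erase (0 : F))) ∪ ((univ.erase (0 : F)) ×ˢ {(0 : F)}) := by
    ext p
    simp only [mem_filter, mem_univ, true_and, mem_union, mem_product, mem_singleton,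
      mem_erase, mul_eq_zero, and_true]
    tauto
  rw [hcongr, Finset.card_union_of_disjoint, Finset.card_product, Finset.card_product]
  · simp [Finset.card_erase_of_mem, Finset.card_univ]; ring
  · rw [Finset.disjoint_left]
    rintro ⟨a, b⟩ h1 h2
    simp only [mem_product, mem_singleton, mem_erase] at h1 h2
    exact h2.1.1 h1.1

open Finset Matrix in
private lemma key_entries {F : Type*} [Field F] [Fintype F]
    (A X : Matrix (Fin 2) (Fin 2) F) (hA : A.det = 1) (hdX : X.det = 1)
    (hds : (A - X).det = 0) :
    (A⁻¹ * X) 1 1 = 2 - (A⁻¹ * X) 0 0 ∧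
    (A⁻¹ * X) 0 1 * (A⁻¹ * X) 1 0 = -((A⁻¹ * X) 0 0 - 1) ^ 2 := by
  have hAu : IsUnit A.det := by rw [hA]; exact isUnit_one
  have hAiA : A⁻¹ * A = 1 := Matrix.nonsing_inv_mul A hAu
  have hdetAi : A⁻¹.det = 1 := by
    have := Matrix.det_mul A⁻¹ A
    rw [hAiA, Matrix.det_one, hA, mul_one] at this
    exact this.symm
  set Y := A⁻¹ * X with hY
  have hdY : Y.det = 1 := by rw [hY, Matrix.det_mul, hdetAi, hdX, mul_one]
  have hd1Y : (1 - Y).det = 0 := by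
    have : (1 : Matrix (Fin 2) (Fin 2) F) - Y = A⁻¹ * (A - X) := by
      rw [Matrix.mul_sub, hAiA, hY]
    rw [this, Matrix.det_mul, hds, mul_zero]
  rw [Matrix.det_fin_two] at hdY hd1Y
  have e01 : ((1 : Matrix (Fin 2) (Fin 2) F) - Y) 0 1 = -Y 0 1 := by
    simp [Matrix.one_apply]
  have e10 : ((1 : Matrix (Fin 2) (Fin 2) F) - Y) 1 0 = -Y 1 0 := by
    simp [Matrix.one_apply]
  have e00 : ((1 : Matrix (Fin 2) (Fin 2) F) - Y) 0 0 = 1 - Y 0 0 := by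
    simp [Matrix.one_apply]
  have e11 : ((1 : Matrix (Fin 2) (Fin 2) F) - Y) 1 1 = 1 - Y 1 1 := by
    simp [Matrix.one_apply]
  rw [e00, e01, e10, e11] at hd1Y
  have h11 : Y 1 1 = 2 - Y 0 0 := by linear_combination hdY - hd1Y
  refine ⟨h11, ?_⟩
  rw [h11] at hdY
  linear_combination -hdY

theorem count_singular_differences_in_SL2 {F : Type*} [Field F] [Fintype F]
    (A : Matrix (Fin 2) (Fin 2) F) (hA : A.det = 1) :
    (Finset.univ.filter
      (fun X : Matrix (Fin 2) (Fin 2) F => X.det = 1 ∧ X ≠ A ∧ (A - X).det = 0)).card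
      = Fintype.card F ^ 2 - 1 := by
  classical
  have hAu : IsUnit A.det := by rw [hA]; exact isUnit_one
  have hAiA : A⁻¹ * A = 1 := Matrix.nonsing_inv_mul A hAu
  have hAAi : A * A⁻¹ = 1 := Matrix.mul_nonsing_inv A hAu
  set q := Fintype.card F with hq
  have hstep : (Finset.univ.filter
      (fun X : Matrix (Fin 2) (Fin 2) F => X.det = 1 ∧ X ≠ A ∧ (A - X).det = 0)).card
      = ((Finset.univ : Finset (F × F × F)).filter
          (fun p => p.2.1 * p.2.2 = -(p.1 - 1)^2 ∧ ¬(p.1 = 1 ∧ p.2.1 = 0 ∧ p.2.2 = 0))).card := by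
    refine Finset.card_bij' (fun X _ => ((A⁻¹ * X) 0 0, (A⁻¹ * X) 0 1, (A⁻¹ * X) 1 0))
      (fun p _ => A * !![p.1, p.2.1; p.2.2, 2 - p.1]) ?hi ?hj ?lft ?rgt
    case hi =>
      intro X hX
      simp only [Finset.mem_filter, Finset.mem_univ, true_and] at hX ⊢
      obtain ⟨hdX, hne, hds⟩ := hX
      obtain ⟨h11, hbc⟩ := key_entries A X hA hdX hds
      refine ⟨hbc, ?_⟩
      rintro ⟨h1, h2, h3⟩
      apply hne
      have hYeq : A⁻¹ * X = 1 := by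
        rw [Matrix.eta_fin_two (A⁻¹ * X), h1, h2, h3, h11, h1]
        norm_num
        exact (Matrix.eta_fin_two 1).symm
      calc X = A * (A⁻¹ * X) := by rw [← Matrix.mul_assoc, hAAi, Matrix.one_mul]
      _ = A * 1 := by rw [hYeq]
      _ = A := Matrix.mul_one A
    case hj =>
      rintro ⟨a, b, c⟩ hp
      simp only [Finset.mem_filter, Finset.mem_univ, true_and] at hp ⊢
      obtain ⟨hbc, hne⟩ := hp
      set M : Matrix (Fin 2) (Fin 2) F := !![a, b; c, 2 - a] with hM
      have hdM : M.det = 1 := by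
        rw [hM, Matrix.det_fin_two_of]; linear_combination -hbc
      refine ⟨?_, ?_, ?_⟩
      · rw [Matrix.det_mul, hA, one_mul, hdM]
      · intro hXA
        have hM1 : M = 1 := by
          calc M = A⁻¹ * (A * M) := by rw [← Matrix.mul_assoc, hAiA, Matrix.one_mul]
          _ = A⁻¹ * A := by rw [hXA]
          _ = 1 := hAiA
        apply hne
        have h00 := congrFun (congrFun hM1 0) 0
        have h01 := congrFun (congrFun hM1 0) 1
        have h10 := congrFun (congrFun hM1 1) 0
        simp [hM, Matrix.one_apply] at h00 h01 h10
        exact ⟨h00, h01, h10⟩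
      · have h1 : A - A * M = A * (1 - M) := by rw [Matrix.mul_sub, Matrix.mul_one]
        rw [h1, Matrix.det_mul, hA, one_mul]
        have h2 : (1 : Matrix (Fin 2) (Fin 2) F) - M = !![1 - a, -b; -c, 1 - (2 - a)] := by
          rw [hM]
          ext i j
          fin_cases i <;> fin_cases j <;> simp [Matrix.one_apply]
        rw [h2, Matrix.det_fin_two_of]
        linear_combination -hbc
    case lft =>
      intro X hX
      simp only [Finset.mem_filter, Finset.mem_univ, true_and] at hX
      obtain ⟨hdX, hne, hds⟩ := hX
      obtain ⟨h11, -⟩ := key_entries A X hA hdX hds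
      have : !![(A⁻¹ * X) 0 0, (A⁻¹ * X) 0 1; (A⁻¹ * X) 1 0, 2 - (A⁻¹ * X) 0 0]
          = A⁻¹ * X := by
        rw [← h11]; exact (Matrix.eta_fin_two _).symm
      simp only
      rw [this, ← Matrix.mul_assoc, hAAi, Matrix.one_mul]
    case rgt =>
      rintro ⟨a, b, c⟩ hp
      have hM : A⁻¹ * (A * !![a, b; c, 2 - a]) = !![a, b; c, 2 - a] := by
        rw [← Matrix.mul_assoc, hAiA, Matrix.one_mul]
      simp [hM]
  rw [hstep]
  rw [Finset.card_filter, Fintype.sum_prod_type]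
  have hsplit : ∀ a : F,
      (∑ p : F × F, if ((a, p).2.1 * (a, p).2.2 = -((a, p).1 - 1)^2
          ∧ ¬((a, p).1 = 1 ∧ (a, p).2.1 = 0 ∧ (a, p).2.2 = 0)) then 1 else 0)
      = if a = 1 then 2 * (q - 1) else q - 1 := by
    intro a
    by_cases ha : a = 1
    · subst ha
      rw [if_pos rfl, ← card_pairs_mul_zero (F := F), Finset.card_filter]
      refine Finset.sum_congr rfl fun p _ => ?_
      norm_num
    · rw [if_neg ha, ← card_pairs_mul_eq_ne_zero (-(a-1)^2) (by
        intro h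
        apply ha
        have h2 : (a - 1)^2 = 0 := neg_eq_zero.mp h
        have h3 := pow_eq_zero_iff (n := 2) (by norm_num) |>.mp h2
        exact sub_eq_zero.mp h3), Finset.card_filter]
      refine Finset.sum_congr rfl fun p _ => ?_
      have hno : ¬(a = 1 ∧ p.1 = 0 ∧ p.2 = 0) := fun h => ha h.1
      simp only [hno, not_false_iff, and_true]
  calc (∑ a : F, ∑ p : F × F, if ((a, p).2.1 * (a, p).2.2 = -((a, p).1 - 1)^2
          ∧ ¬((a, p).1 = 1 ∧ (a, p).2.1 = 0 ∧ (a, p).2.2 = 0)) then 1 else 0)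
      = ∑ a : F, if a = 1 then 2 * (q - 1) else q - 1 :=
        Finset.sum_congr rfl (fun a _ => hsplit a)
    _ = 2 * (q - 1) + (q - 1) * (q - 1) := by
        rw [← Finset.add_sum_erase _ _ (Finset.mem_univ (1 : F)), if_pos rfl]
        congr 1
        rw [Finset.sum_congr rfl (fun a ha => if_neg (Finset.ne_of_mem_erase ha)),
          Finset.sum_const, Finset.card_erase_of_mem (Finset.mem_univ _), Finset.card_univ,
          smul_eq_mul]
    _ = q ^ 2 - 1 := by
        have hq2 : 2 ≤ q := Fintype.one_lt_card
        obtain ⟨k, hk⟩ : ∃ k, q = k + 1 := ⟨q - 1, by omega⟩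
        have h1 : (k + 1) ^ 2 = k * k + 2 * k + 1 := by ring
        rw [hk, h1, Nat.add_sub_cancel, Nat.add_sub_cancel]
        ring
end

section
/- The graph on vertex set SL₂(F_q) in which two distinct matrices A, B are adjacent iff det(A − B) ≠ 0 is regular of degree q³ − q² − q. -/
/-!
Left multiplication by `A⁻¹` maps `SL₂(F)` onto itself and the neighbours of `A` onto those of
`1`. For `C ∈ SL₂(F)` we have `det (1 - C) = 2 - tr C`, so the neighbours of `1` are the elements
of trace `≠ 2`. Fibering over the diagonal `(a, d)`, both `SL₂(F)` and its elements of trace `2`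
are counted by the number of solutions of `b * c = a * d - 1`, which is `q - 1`, plus `q` when
the right-hand side vanishes: this gives `q³ - q` and `q²` respectively.
-/

open scoped Classical

open Finset Matrix

lemma card_filter_prod_eq_sum {α β : Type*} [Fintype α] [Fintype β] (p : α × β → Prop) :
    #{x | p x} = ∑ a, #{b | p (a, b)} := by
  simp only [card_filter, Fintype.sum_prod_type]

section Hyperbola

variable {F : Type*} [Field F] [Fintype F]

lemma card_filter_mul_eq (t : F) :
    #{x : F × F | x.1 * x.2 = t} = Fintype.card F - 1 + if t = 0 then Fintype.card F else 0 := by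
  have fiber (a : F) :
      #{b : F | a * b = t} = if a = 0 then (if t = 0 then Fintype.card F else 0) else 1 := by
    split_ifs with ha ht
    · simp [ha, ht]
    · simp [ha, Ne.symm ht]
    · exact card_eq_one.mpr ⟨a⁻¹ * t, by ext b; simp [eq_inv_mul_iff_mul_eq₀ ha]⟩
  rw [card_filter_prod_eq_sum, Fintype.sum_eq_add_sum_compl 0, fiber, if_pos rfl,
    sum_congr rfl fun a ha => (fiber a).trans (if_neg (by simpa using ha))]
  simp [card_compl, add_comm]

end Hyperbola

section Reduction

variable {n R : Type*} [Fintype n] [DecidableEq n] [Nonempty n] [CommRing R] [Fintype R]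

lemma card_filter_det_eq_one_ne_det_sub_ne_zero (A : Matrix n n R) (hA : A.det = 1) :
    #{B : Matrix n n R | B.det = 1 ∧ B ≠ A ∧ (A - B).det ≠ 0} =
      #{C : Matrix n n R | C.det = 1 ∧ (1 - C).det ≠ 0} := by
  have hAu : IsUnit A := (isUnit_iff_isUnit_det A).mpr (hA ▸ isUnit_one)
  refine (card_equiv (Units.mulLeft hAu.unit) fun C => ?_).symm
  have hsub : A - A * C = A * (1 - C) := by rw [mul_sub, mul_one]
  simp only [mem_filter, mem_univ, true_and, Units.mulLeft_apply, IsUnit.unit_spec, hsub,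
    det_mul, hA, one_mul]
  refine ⟨fun ⟨h1, h2⟩ => ⟨h1, fun h => h2 ?_, h2⟩, fun ⟨h1, _, h2⟩ => ⟨h1, h2⟩⟩
  rw [hAu.mul_left_cancel (h.trans (mul_one A).symm), sub_self, det_zero]

end Reduction

section FinTwo

variable {F : Type*} [Field F] [Fintype F]

lemma det_one_sub_fin_two {R : Type*} [CommRing R] (C : Matrix (Fin 2) (Fin 2) R) :
    (1 - C).det = 1 - C.trace + C.det := by
  simp only [det_fin_two, trace_fin_two, Matrix.sub_apply, one_apply_eq, one_apply_ne,
    zero_ne_one, one_ne_zero, ne_eq, not_false_eq_true]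
  ring

/-- The diagonal comes first, so that the first component is the fibre variable `(a, d)`. -/
@[simps]
def finTwoMatrixEquiv (R : Type*) : (R × R) × (R × R) ≃ Matrix (Fin 2) (Fin 2) R where
  toFun x := !![x.1.1, x.2.1; x.2.2, x.1.2]
  invFun C := ((C 0 0, C 1 1), (C 0 1, C 1 0))
  left_inv _ := rfl
  right_inv C := (eta_fin_two C).symm

lemma card_filter_det_eq_one_and (P : F → F → Prop) :
    #{C : Matrix (Fin 2) (Fin 2) F | C.det = 1 ∧ P (C 0 0) (C 1 1)} =
      ∑ a, ∑ d, if P a d then #{x : F × F | x.1 * x.2 = a * d - 1} else 0 := by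
  rw [card_filter, ← (finTwoMatrixEquiv F).sum_comp, Fintype.sum_prod_type,
    Fintype.sum_prod_type]
  refine sum_congr rfl fun a _ => sum_congr rfl fun d _ => ?_
  split_ifs with hP
  · rw [card_filter]
    refine sum_congr rfl fun x _ => ?_
    simp [hP, sub_eq_iff_eq_add', eq_sub_iff_add_eq, eq_comm]
  · simp [hP]

lemma sum_card_filter_mul_eq {ι : Type*} [Fintype ι] (t : ι → F) :
    ∑ i, #{x : F × F | x.1 * x.2 = t i} =
      Fintype.card ι * (Fintype.card F - 1) + #{i | t i = 0} * Fintype.card F := by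
  simp only [card_filter_mul_eq, sum_add_distrib, sum_const, smul_eq_mul, ← sum_filter, card_univ]

lemma card_det_eq_one : #{C : Matrix (Fin 2) (Fin 2) F | C.det = 1} =
    Fintype.card F ^ 3 - Fintype.card F := by
  have h := card_filter_det_eq_one_and (F := F) fun _ _ => True
  simp only [and_true, if_true] at h
  rw [h, ← Fintype.sum_prod_type' (f := fun a d => #{x : F × F | x.1 * x.2 = a * d - 1}),
    sum_card_filter_mul_eq]
  simp only [sub_eq_zero]
  rw [card_filter_mul_eq, if_neg one_ne_zero, add_zero, Fintype.card_prod]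
  obtain ⟨k, hk⟩ := Nat.exists_eq_add_one_of_ne_zero (Fintype.card_ne_zero (α := F))
  rw [hk, Nat.add_sub_cancel]
  refine (Nat.sub_eq_of_eq_add ?_).symm
  ring

lemma card_det_eq_one_trace_eq_two :
    #{C : Matrix (Fin 2) (Fin 2) F | C.det = 1 ∧ C.trace = 2} = Fintype.card F ^ 2 := by
  have h := card_filter_det_eq_one_and (F := F) fun a d => a + d = 2
  simp only [← trace_fin_two] at h
  rw [h]
  simp only [← eq_sub_iff_add_eq', sum_ite_eq', mem_univ, if_true]
  rw [sum_card_filter_mul_eq]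
  have hone (a : F) : a * (2 - a) - 1 = 0 ↔ a = 1 := by
    rw [show a * (2 - a) - 1 = -(a - 1) ^ 2 by ring, neg_eq_zero, pow_eq_zero_iff two_ne_zero,
      sub_eq_zero]
  have hunique : #{a : F | a = 1} = 1 := card_eq_one.mpr ⟨1, by ext; simp⟩
  simp only [hone, hunique]
  obtain ⟨k, hk⟩ := Nat.exists_eq_add_one_of_ne_zero (Fintype.card_ne_zero (α := F))
  rw [hk, Nat.add_sub_cancel]
  ring

lemma card_det_eq_one_det_one_sub_ne_zero :
    #{C : Matrix (Fin 2) (Fin 2) F | C.det = 1 ∧ (1 - C).det ≠ 0} =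
      Fintype.card F ^ 3 - Fintype.card F ^ 2 - Fintype.card F := by
  have htrace : ∀ C ∈ (univ : Finset (Matrix (Fin 2) (Fin 2) F)),
      C.det = 1 ∧ (1 - C).det ≠ 0 ↔ C.det = 1 ∧ ¬C.trace = 2 := by
    intro C _
    refine and_congr_right fun hC => ?_
    rw [det_one_sub_fin_two, hC, show (1 : F) - C.trace + 1 = 2 - C.trace by ring]
    exact sub_ne_zero.trans ne_comm
  have hsplit := card_filter_add_card_filter_not (s := {C : Matrix (Fin 2) (Fin 2) F | C.det = 1})
    fun C => C.trace = 2
  rw [filter_filter, filter_filter, card_det_eq_one, card_det_eq_one_trace_eq_two] at hsplit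
  rw [filter_congr htrace]
  omega

end FinTwo

theorem sl2_invertible_difference_graph_regular {F : Type*} [Field F] [Fintype F]
    (A : Matrix (Fin 2) (Fin 2) F) (hA : A.det = 1) :
    (Finset.univ.filter
      (fun B : Matrix (Fin 2) (Fin 2) F => B.det = 1 ∧ B ≠ A ∧ (A - B).det ≠ 0)).card
      = Fintype.card F ^ 3 - Fintype.card F ^ 2 - Fintype.card F := by
  rw [card_filter_det_eq_one_ne_det_sub_ne_zero A hA, card_det_eq_one_det_one_sub_ne_zero]
end
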